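/- Let $m \geq 1$, let $f = y^m + h$ with $h \in \langle x,y\rangle^{m+1} \subseteq \mathbb{C}[[x,y]]$, and let $g = a \cdot \partial f/\partial x + b \cdot \partial f/\partial y + h'$ with $a, b \in \mathbb{C}[[x,y]]$ and $h' \in \langle x,y\rangle^m$. Then for every constant $c \in \mathbb{C}$, the deformation $f + \varepsilon g$ lies in $\langle x + \varepsilon(c + a), y + \varepsilon b \rangle^m$ in $\mathbb{C}[[x,y]][\varepsilon]/(\varepsilon^2)$, i.e., it is equimultiple along the section $(x,y) \mapsto (x + \varepsilon(c+a), y + \varepsilon b)$ for all $c \in \mathbb{C}$. -/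

import Mathlib

set_option synthInstance.maxHeartbeats 1000000
set_option maxHeartbeats 2000000

open MvPowerSeries TrivSqZeroExt DualNumber

noncomputable section

abbrev R2 := MvPowerSeries (Fin 2) ℂ

def Mxy : Ideal R2 := Ideal.span {MvPowerSeries.X 0, MvPowerSeries.X 1}

/-- Formal partial derivative of a power series in two variables. -/
def pd (i : Fin 2) (f : R2) : R2 :=
  fun d => (d i + 1 : ℂ) * MvPowerSeries.coeff (R := ℂ) (d + Finsupp.single i 1) f

/-- The element `x + ε a` of the dual numbers over `ℂ[[x,y]]`. -/
def Xa (a : R2) : DualNumber R2 := inl (MvPowerSeries.X 0) + eps * inl a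

/-- The element `y + ε b` of the dual numbers over `ℂ[[x,y]]`. -/
def Yb (b : R2) : DualNumber R2 := inl (MvPowerSeries.X 1) + eps * inl b

/-- The `n`-th term of the expansion of `f (x + ε a, y + ε b)`. -/
def termD (a b f : R2) (n : Fin 2 →₀ ℕ) : DualNumber R2 :=
  inl (MvPowerSeries.C (σ := Fin 2) (R := ℂ) (MvPowerSeries.coeff (R := ℂ) n f)) *
    (Xa a ^ (n 0) * Yb b ^ (n 1))

/-- Substitution `f (x + ε a, y + ε b)`, defined coefficientwise: each coefficient of
each component only receives contributions from finitely many terms of the expansion. -/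
def substDual (a b f : R2) : DualNumber R2 :=
  TrivSqZeroExt.inl (R := R2) (M := R2) ((fun d => MvPowerSeries.coeff (R := ℂ) d
        (fst (∑ n ∈ Finset.Iic (d + Finsupp.single 0 1 + Finsupp.single 1 1),
          termD a b f n)) : R2)) +
  TrivSqZeroExt.inr (R := R2) (M := R2) ((fun d => MvPowerSeries.coeff (R := ℂ) d
        (snd (∑ n ∈ Finset.Iic (d + Finsupp.single 0 1 + Finsupp.single 1 1),
          termD a b f n)) : R2))

/-! A derivation `D` of `R` gives the ring homomorphism `p ↦ p + ε D p` from `R` to `R[ε]`.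
For `D = (c + a) ∂ₓ + b ∂ᵧ` it sends `x, y` to `x + ε(c + a), y + ε b`, so it maps `⟨x,y⟩^m` into the
`m`-th power of the ideal of the section. Then `f + ε g = (f + ε D f) + ε (h' - c ∂ₓ f)`, and
`h' - c ∂ₓ f ∈ ⟨x,y⟩^m` because `∂ₓ (y^m) = 0` while `∂ₓ h ∈ ⟨x,y⟩^m`; multiplying by `ε` kills the
difference between `inl w` and its image `w + ε D w`. -/

namespace Derivation

variable {R A : Type*} [CommSemiring R] [CommRing A] [Algebra R A]

theorem apply_mem_pow_of_mem_pow_succ (D : Derivation R A A) (I : Ideal A) :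
    ∀ {n : ℕ} {x : A}, x ∈ I ^ (n + 1) → D x ∈ I ^ n
  | 0, _, _ => by simp
  | n + 1, x, hx => by
    rw [pow_succ] at hx
    refine Submodule.mul_induction_on hx (fun p hp q hq => ?_) (fun p q hp hq => ?_)
    · rw [leibniz, smul_eq_mul, smul_eq_mul, pow_succ']
      exact add_mem (Ideal.mul_mem_right _ _ (pow_succ' I n ▸ hp))
        (Ideal.mul_mem_mul hq (apply_mem_pow_of_mem_pow_succ D I hp))
    · rw [map_add]
      exact add_mem hp hq

def toDualNumber (D : Derivation R A A) : A →+* DualNumber A where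
  toFun p := inl p + eps * inl (D p)
  map_one' := by ext <;> simp
  map_mul' p q := by ext <;> simp [leibniz, add_comm, mul_comm]
  map_zero' := by ext <;> simp
  map_add' p q := by ext <;> simp

theorem inl_add_eps_mul_mem_map_pow (D : Derivation R A A) (I : Ideal A) {n : ℕ} {f w : A}
    (hf : f ∈ I ^ n) (hw : w ∈ I ^ n) :
    inl f + eps * inl (D f + w) ∈ (I.map D.toDualNumber) ^ n := by
  have hsplit : inl f + eps * inl (D f + w) = D.toDualNumber f + eps * D.toDualNumber w := by
    ext <;> simp [toDualNumber]
  rw [hsplit, ← Ideal.map_pow]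
  exact add_mem (Ideal.mem_map_of_mem _ hf) (Ideal.mul_mem_left _ _ (Ideal.mem_map_of_mem _ hw))

end Derivation

theorem pd_eq_pderiv (i : Fin 2) (f : R2) : pd i f = pderiv ℂ i f := by
  ext d
  rw [coeff_pderiv, mul_comm]
  rfl

theorem span_Xa_Yb_eq_map (u b : R2) :
    Ideal.span {Xa u, Yb b} =
      Mxy.map (u • pderiv ℂ (0 : Fin 2) + b • pderiv ℂ 1).toDualNumber := by
  rw [Mxy, Ideal.map_span, Set.image_pair]
  congr 2 <;> simp [Derivation.toDualNumber, Xa, Yb]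

theorem section_not_unique_unitangential_general (m : ℕ) (h h' a b f g : R2)
    (hh : h ∈ Mxy ^ (m + 1)) (hh' : h' ∈ Mxy ^ m)
    (hf : f = MvPowerSeries.X 1 ^ m + h)
    (hg : g = a * pd 0 f + b * pd 1 f + h') :
    ∀ c : ℂ,
      (TrivSqZeroExt.inl f + eps * TrivSqZeroExt.inl g : DualNumber R2)
        ∈ Ideal.span {Xa (MvPowerSeries.C (σ := Fin 2) (R := ℂ) c + a), Yb b} ^ m := by
  intro c
  set u : R2 := MvPowerSeries.C c + a
  set D : Derivation ℂ R2 R2 := u • pderiv ℂ 0 + b • pderiv ℂ 1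
  have hf_mem : f ∈ Mxy ^ m := by
    rw [hf]
    refine add_mem (Ideal.pow_mem_pow (Ideal.subset_span (by simp)) m) ?_
    exact Ideal.pow_le_pow_right (Nat.le_succ m) hh
  have hfx_mem : pderiv ℂ 0 f ∈ Mxy ^ m := by
    rw [hf, map_add, pderiv_pow, pderiv_X_of_ne (by decide), mul_zero, zero_add]
    exact (pderiv ℂ 0).apply_mem_pow_of_mem_pow_succ Mxy hh
  have hg' : g = D f + (h' - MvPowerSeries.C c * pderiv ℂ 0 f) := by
    simp only [hg, pd_eq_pderiv, D, u, Derivation.add_apply, Derivation.smul_apply, smul_eq_mul]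
    ring
  rw [hg', span_Xa_Yb_eq_map]
  exact D.inl_add_eps_mul_mem_map_pow Mxy hf_mem (sub_mem hh' (Ideal.mul_mem_left _ _ hfx_mem))

/-- In the unitangential case `f = y^m + h.o.t.`, the deformation `f + ε g` with
`g = a f_x + b f_y + h'` is equimultiple along the shifted sections
`(x,y) ↦ (x + ε(c + a), y + ε b)` for every constant `c ∈ ℂ`. -/
theorem section_not_unique_unitangential (m : ℕ) (hm : 1 ≤ m) (h h' a b f g : R2)
    (hh : h ∈ Mxy ^ (m + 1)) (hh' : h' ∈ Mxy ^ m)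
    (hf : f = MvPowerSeries.X 1 ^ m + h)
    (hg : g = a * pd 0 f + b * pd 1 f + h') :
    ∀ c : ℂ,
      (TrivSqZeroExt.inl f + eps * TrivSqZeroExt.inl g : DualNumber R2)
        ∈ Ideal.span {Xa (MvPowerSeries.C (σ := Fin 2) (R := ℂ) c + a), Yb b} ^ m :=
  section_not_unique_unitangential_general m h h' a b f g hh hh' hf hg

end
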